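/- For any n×d matrix Φ and positive integers a and b, the RIP constants satisfy δ_{ab} ≤ b · δ_{2a}. Consequently, in the regime ē, m → ∞ with ē = o(m), the OMP recovery condition δ_{m+1} < 1/(√(m+1)) implies δ_{m+1+ē} ≤ 2(1+o(1))/√(m+1). -/

import Mathlib

open Matrix Finset

noncomputable section

/-- Number of nonzero entries of a vector. -/
def sparsity {d : ℕ} (x : Fin d → ℝ) : ℕ :=
  (Finset.univ.filter fun i => x i ≠ 0).card

/-- Squared Euclidean norm. -/
def nsq {k : Type*} [Fintype k] (v : k → ℝ) : ℝ := ∑ i, v i ^ 2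

/-- Euclidean (ℓ₂) norm. -/
def l2 {k : Type*} [Fintype k] (v : k → ℝ) : ℝ := Real.sqrt (nsq v)

/-- `Φ` satisfies the order-`t` restricted isometry property with constant `δ`. -/
def satRIP {n d : ℕ} (Φ : Matrix (Fin n) (Fin d) ℝ) (t : ℕ) (δ : ℝ) : Prop :=
  ∀ x : Fin d → ℝ, sparsity x ≤ t →
    (1 - δ) * nsq x ≤ nsq (Φ.mulVec x) ∧ nsq (Φ.mulVec x) ≤ (1 + δ) * nsq x

/-- The order-`t` RIP constant of `Φ` : the smallest `δ ≥ 0` satisfying the RIP bounds. -/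
def ripConst {n d : ℕ} (Φ : Matrix (Fin n) (Fin d) ℝ) (t : ℕ) : ℝ :=
  sInf {δ : ℝ | 0 ≤ δ ∧ satRIP Φ t δ}

/-- The submatrix of `Φ` consisting of the columns indexed by `s`. -/
def cols {n d : ℕ} (Φ : Matrix (Fin n) (Fin d) ℝ) (s : Finset (Fin d)) :
    Matrix (Fin n) {i // i ∈ s} ℝ := Φ.submatrix id (fun i => (i : Fin d))

/-- Orthogonal projection `P{Φ_s} = Φ_s (Φ_sᵀ Φ_s)⁻¹ Φ_sᵀ` onto the column span of `Φ_s`. -/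
def proj {n d : ℕ} (Φ : Matrix (Fin n) (Fin d) ℝ) (s : Finset (Fin d)) :
    Matrix (Fin n) (Fin n) ℝ :=
  cols Φ s * ((cols Φ s)ᵀ * cols Φ s)⁻¹ * (cols Φ s)ᵀ

/-- Least-squares residual `v^{⊥s} = (I - P{Φ_s}) v`. -/
def residVec {n d : ℕ} (Φ : Matrix (Fin n) (Fin d) ℝ) (s : Finset (Fin d)) (y : Fin n → ℝ) :
    Fin n → ℝ := y - (proj Φ s).mulVec y

/-- The `i`-th column of `Φ`. -/
def col {n d : ℕ} (Φ : Matrix (Fin n) (Fin d) ℝ) (i : Fin d) : Fin n → ℝ := fun k => Φ k i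

/-- `x` is a least-squares estimate of `y` supported on `s`:
it is supported on `s` and minimizes `‖y - Φ z‖₂` over all `z` supported on `s`. -/
def leastSq {n d : ℕ} (Φ : Matrix (Fin n) (Fin d) ℝ) (y : Fin n → ℝ) (s : Finset (Fin d))
    (x : Fin d → ℝ) : Prop :=
  (∀ i, i ∉ s → x i = 0) ∧
  ∀ z : Fin d → ℝ, (∀ i, i ∉ s → z i = 0) → nsq (y - Φ.mulVec x) ≤ nsq (y - Φ.mulVec z)

/-- The support of a vector, as a `Finset`. -/
def spt {d : ℕ} (x : Fin d → ℝ) : Finset (Fin d) :=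
  Finset.univ.filter fun i => x i ≠ 0

/-!
Polarization turns the RIP of order `2a` into `|⟪Φu, Φv⟫ - ⟪u, v⟫| ≤ δ_{2a} ‖u‖ ‖v‖` for
`a`-sparse `u, v`; hence if `x = ∑ yⱼ` with every `yⱼ` `a`-sparse, then
`|‖Φx‖² - ‖x‖²| ≤ δ_{2a} (∑ ‖yⱼ‖)²`. Cutting an `ab`-sparse `x` into `b` blocks of disjoint
supports and applying Cauchy–Schwarz gives `δ_{ab} ≤ b δ_{2a}`.

For the asymptotic bound this is too coarse: with `2a ≤ m + 1 < m + 1 + ē` the integer `b` is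
at least `3`. Instead, keep the `2a` largest entries of `x` as two blocks and cut the at most
`ē + 1` remaining entries, each of square at most `‖x‖² / 2a`, into blocks of size `a`; their
norms add up to `o(‖x‖)`, so `δ_{m+1+ē} ≤ (√2 + o(1))² δ_{m+1}`.
-/

lemma nsq_eq_dotProduct {k : Type*} [Fintype k] (v : k → ℝ) : nsq v = v ⬝ᵥ v := by
  simp only [nsq, dotProduct, sq]

lemma nsq_nonneg {k : Type*} [Fintype k] (v : k → ℝ) : 0 ≤ nsq v :=
  Finset.sum_nonneg fun i _ => sq_nonneg _

lemma l2_sq {k : Type*} [Fintype k] (v : k → ℝ) : l2 v ^ 2 = nsq v :=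
  Real.sq_sqrt (nsq_nonneg v)

lemma l2_eq_zero_iff {k : Type*} [Fintype k] (v : k → ℝ) : l2 v = 0 ↔ v = 0 := by
  rw [l2, Real.sqrt_eq_zero (nsq_nonneg v), nsq_eq_dotProduct, dotProduct_self_eq_zero]

lemma nsq_smul {k : Type*} [Fintype k] (c : ℝ) (v : k → ℝ) : nsq (c • v) = c ^ 2 * nsq v := by
  simp only [nsq, Pi.smul_apply, smul_eq_mul, mul_pow, Finset.mul_sum]

lemma nsq_add_add_nsq_sub {k : Type*} [Fintype k] (u v : k → ℝ) :
    nsq (u + v) + nsq (u - v) = 2 * (nsq u + nsq v) := by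
  simp only [nsq_eq_dotProduct, add_dotProduct, dotProduct_add, sub_dotProduct, dotProduct_sub]
  ring

lemma nsq_indicator_add_nsq_indicator_compl {k : Type*} [Fintype k] (s : Set k) (v : k → ℝ) :
    nsq (s.indicator v) + nsq (sᶜ.indicator v) = nsq v := by
  simp only [nsq, ← Finset.sum_add_distrib]
  refine Finset.sum_congr rfl fun i _ => ?_
  by_cases hi : i ∈ s <;> simp [hi]

namespace Matrix
variable {m n : Type*} [Fintype m] [Fintype n]

lemma nsq_mulVec_le (Φ : Matrix m n ℝ) (x : n → ℝ) :
    nsq (Φ *ᵥ x) ≤ (∑ k, ∑ j, Φ k j ^ 2) * nsq x := by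
  rw [nsq, Finset.sum_mul]
  exact Finset.sum_le_sum fun k _ => Finset.sum_mul_sq_le_sq_mul_sq _ _ _

end Matrix

section Sparsity
variable {d : ℕ}

lemma sparsity_eq_card_spt (x : Fin d → ℝ) : sparsity x = (spt x).card := rfl

lemma spt_add_subset (u v : Fin d → ℝ) : spt (u + v) ⊆ spt u ∪ spt v := by
  intro i
  simp only [spt, Finset.mem_union, Finset.mem_filter, Finset.mem_univ, true_and, Pi.add_apply]
  contrapose!
  rintro ⟨hu, hv⟩
  simp [hu, hv]

lemma sparsity_add_le (u v : Fin d → ℝ) : sparsity (u + v) ≤ sparsity u + sparsity v :=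
  (Finset.card_le_card (spt_add_subset u v)).trans (Finset.card_union_le _ _)

lemma sparsity_smul_le (c : ℝ) (x : Fin d → ℝ) : sparsity (c • x) ≤ sparsity x :=
  Finset.card_le_card fun i => by simp +contextual

lemma sparsity_neg (x : Fin d → ℝ) : sparsity (-x) = sparsity x := by
  simp [sparsity]

lemma sparsity_sub_le (u v : Fin d → ℝ) : sparsity (u - v) ≤ sparsity u + sparsity v := by
  simpa [sub_eq_add_neg, sparsity_neg] using sparsity_add_le u (-v)

lemma spt_indicator (S : Finset (Fin d)) (x : Fin d → ℝ) :
    spt ((S : Set (Fin d)).indicator x) = spt x ∩ S := by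
  ext i
  by_cases hi : i ∈ S <;> simp [spt, hi]

lemma spt_indicator_compl (S : Finset (Fin d)) (x : Fin d → ℝ) :
    spt ((S : Set (Fin d))ᶜ.indicator x) = spt x \ S := by
  ext i
  by_cases hi : i ∈ S <;> simp [spt, hi]

lemma eq_zero_of_sparsity_eq_zero {x : Fin d → ℝ} (h : sparsity x = 0) : x = 0 := by
  funext i
  by_contra hi
  simp only [sparsity, Finset.card_eq_zero, Finset.filter_eq_empty_iff] at h
  exact h (Finset.mem_univ i) hi

lemma nsq_eq_sum_spt (x : Fin d → ℝ) : nsq x = ∑ i ∈ spt x, x i ^ 2 := by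
  rw [nsq, spt, sum_filter_of_ne]
  intro i _ hi h0
  simp [h0] at hi

end Sparsity

section RIP
variable {n d : ℕ} {Φ : Matrix (Fin n) (Fin d) ℝ} {t : ℕ} {δ : ℝ}

lemma satRIP_iff_abs_le :
    satRIP Φ t δ ↔ ∀ x, sparsity x ≤ t → |nsq (Φ *ᵥ x) - nsq x| ≤ δ * nsq x := by
  refine forall₂_congr fun x _ => ?_
  rw [abs_sub_le_iff]
  constructor <;> intro h <;> constructor <;> linarith [h.1, h.2]

lemma satRIP.abs_sub_le (h : satRIP Φ t δ) {x : Fin d → ℝ} (hx : sparsity x ≤ t) :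
    |nsq (Φ *ᵥ x) - nsq x| ≤ δ * nsq x :=
  satRIP_iff_abs_le.1 h x hx

lemma satRIP.mono (h : satRIP Φ t δ) {t' : ℕ} (ht : t' ≤ t) : satRIP Φ t' δ :=
  fun x hx => h x (hx.trans ht)

variable (Φ t)

lemma isClosed_setOf_satRIP : IsClosed {δ : ℝ | 0 ≤ δ ∧ satRIP Φ t δ} := by
  simp only [satRIP, Set.ofPred_and, Set.ofPred_forall]
  exact (isClosed_le continuous_const continuous_id).inter <| isClosed_iInter fun x =>
    isClosed_iInter fun _ => (isClosed_le (by fun_prop) continuous_const).inter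
      (isClosed_le continuous_const (by fun_prop))

lemma nonempty_setOf_satRIP : {δ : ℝ | 0 ≤ δ ∧ satRIP Φ t δ}.Nonempty := by
  have hC : 0 ≤ ∑ k, ∑ j, Φ k j ^ 2 := by positivity
  refine ⟨1 + ∑ k, ∑ j, Φ k j ^ 2, by positivity, satRIP_iff_abs_le.2 fun x _ => ?_⟩
  have hΦx := Φ.nsq_mulVec_le x
  rw [abs_le]
  constructor <;> nlinarith [nsq_nonneg x, nsq_nonneg (Φ *ᵥ x)]

lemma satRIP_ripConst : satRIP Φ t (ripConst Φ t) :=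
  ((isClosed_setOf_satRIP Φ t).csInf_mem (nonempty_setOf_satRIP Φ t) ⟨0, fun _ h => h.1⟩).2

lemma ripConst_nonneg : 0 ≤ ripConst Φ t :=
  le_csInf (nonempty_setOf_satRIP Φ t) fun _ h => h.1

variable {Φ t}

lemma ripConst_le (hδ : 0 ≤ δ) (h : satRIP Φ t δ) : ripConst Φ t ≤ δ :=
  csInf_le ⟨0, fun _ h => h.1⟩ ⟨hδ, h⟩

lemma ripConst_mono {t' : ℕ} (ht : t' ≤ t) : ripConst Φ t' ≤ ripConst Φ t :=
  ripConst_le (ripConst_nonneg Φ t) ((satRIP_ripConst Φ t).mono ht)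

end RIP

namespace satRIP
variable {n d : ℕ} {Φ : Matrix (Fin n) (Fin d) ℝ} {t : ℕ} {δ : ℝ}

lemma abs_dotProduct_sub_le_mul_nsq_add (h : satRIP Φ t δ) {u v : Fin d → ℝ}
    (hadd : sparsity (u + v) ≤ t) (hsub : sparsity (u - v) ≤ t) :
    |(Φ *ᵥ u) ⬝ᵥ (Φ *ᵥ v) - u ⬝ᵥ v| ≤ δ * (nsq u + nsq v) / 2 := by
  have key : 4 * ((Φ *ᵥ u) ⬝ᵥ (Φ *ᵥ v) - u ⬝ᵥ v) =
      (nsq (Φ *ᵥ (u + v)) - nsq (u + v)) - (nsq (Φ *ᵥ (u - v)) - nsq (u - v)) := by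
    simp only [nsq_eq_dotProduct, Matrix.mulVec_add, Matrix.mulVec_sub, add_dotProduct,
      dotProduct_add, sub_dotProduct, dotProduct_sub, dotProduct_comm v u,
      dotProduct_comm (Φ *ᵥ v) (Φ *ᵥ u)]
    ring
  have hdiff := (abs_sub _ _).trans (add_le_add (h.abs_sub_le hadd) (h.abs_sub_le hsub))
  rw [← key, abs_mul, ← mul_add, nsq_add_add_nsq_sub] at hdiff
  norm_num at hdiff
  linarith

/-- Rescaling `u` by `‖v‖` and `v` by `‖u‖` turns the polarization bound into a product bound. -/
lemma abs_dotProduct_sub_le (h : satRIP Φ t δ) {u v : Fin d → ℝ}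
    (huv : sparsity u + sparsity v ≤ t) :
    |(Φ *ᵥ u) ⬝ᵥ (Φ *ᵥ v) - u ⬝ᵥ v| ≤ δ * l2 u * l2 v := by
  have hpol := h.abs_dotProduct_sub_le_mul_nsq_add (u := l2 v • u) (v := l2 u • v)
    ((sparsity_add_le _ _).trans (by grw [sparsity_smul_le, sparsity_smul_le, huv]))
    ((sparsity_sub_le _ _).trans (by grw [sparsity_smul_le, sparsity_smul_le, huv]))
  have hscale : (Φ *ᵥ (l2 v • u)) ⬝ᵥ (Φ *ᵥ (l2 u • v)) - (l2 v • u) ⬝ᵥ (l2 u • v) =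
      (l2 u * l2 v) * ((Φ *ᵥ u) ⬝ᵥ (Φ *ᵥ v) - u ⬝ᵥ v) := by
    simp only [Matrix.mulVec_smul, smul_dotProduct, dotProduct_smul, smul_eq_mul]
    ring
  rw [hscale, nsq_smul, nsq_smul, ← l2_sq u, ← l2_sq v, abs_mul,
    abs_of_nonneg (by unfold l2; positivity)] at hpol
  rcases (show 0 ≤ l2 u * l2 v by unfold l2; positivity).eq_or_lt with h0 | hpos
  · obtain hu | hv := mul_eq_zero.1 h0.symm
    · rw [hu, (l2_eq_zero_iff u).1 hu]; simp
    · rw [hv, (l2_eq_zero_iff v).1 hv]; simp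
  · nlinarith

lemma abs_nsq_mulVec_sum_sub_le {a : ℕ} (h : satRIP Φ (2 * a) δ) {ι : Type*} [Fintype ι]
    (y : ι → Fin d → ℝ) (hy : ∀ j, sparsity (y j) ≤ a) :
    |nsq (Φ *ᵥ ∑ j, y j) - nsq (∑ j, y j)| ≤ δ * (∑ j, l2 (y j)) ^ 2 := by
  have hpair : ∀ j l, |(Φ *ᵥ y j) ⬝ᵥ (Φ *ᵥ y l) - y j ⬝ᵥ y l| ≤ δ * l2 (y j) * l2 (y l) :=
    fun j l => h.abs_dotProduct_sub_le (by linarith [hy j, hy l])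
  simp only [nsq_eq_dotProduct, Matrix.mulVec_sum, sum_dotProduct, dotProduct_sum,
    ← Finset.sum_sub_distrib]
  calc |∑ l, ∑ j, ((Φ *ᵥ y j) ⬝ᵥ (Φ *ᵥ y l) - y j ⬝ᵥ y l)|
      ≤ ∑ l, ∑ j, δ * l2 (y j) * l2 (y l) :=
        (Finset.abs_sum_le_sum_abs _ _).trans <| Finset.sum_le_sum fun l _ =>
          (Finset.abs_sum_le_sum_abs _ _).trans <| Finset.sum_le_sum fun j _ => hpair j l
    _ = δ * (∑ j, l2 (y j)) ^ 2 := by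
        rw [Finset.sum_comm, sq, Finset.sum_mul_sum, Finset.mul_sum]
        simp only [Finset.mul_sum, mul_assoc]

end satRIP

def HasSparseSplit {d : ℕ} (a : ℕ) (x : Fin d → ℝ) (c : ℝ) : Prop :=
  ∃ (b : ℕ) (y : Fin b → Fin d → ℝ), ∑ j, y j = x ∧ (∀ j, sparsity (y j) ≤ a) ∧
    ∑ j, l2 (y j) ≤ c

namespace HasSparseSplit
variable {d a : ℕ} {x : Fin d → ℝ} {c : ℝ}

lemma mono (h : HasSparseSplit a x c) {c' : ℝ} (hc : c ≤ c') : HasSparseSplit a x c' :=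
  let ⟨b, y, hsum, hy, hc₀⟩ := h
  ⟨b, y, hsum, hy, hc₀.trans hc⟩

lemma add (hx : HasSparseSplit a x c) {x' : Fin d → ℝ} {c' : ℝ}
    (hx' : HasSparseSplit a x' c') : HasSparseSplit a (x + x') (c + c') := by
  obtain ⟨b, y, rfl, hy, hc⟩ := hx
  obtain ⟨b', y', rfl, hy', hc'⟩ := hx'
  refine ⟨b + b', Fin.append y y', by simp [Fin.sum_univ_add], fun j => ?_, ?_⟩
  · cases j using Fin.addCases <;> simp [hy, hy']
  · simpa [Fin.sum_univ_add] using add_le_add hc hc'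

lemma abs_nsq_mulVec_sub_le (hx : HasSparseSplit a x c) {n : ℕ}
    {Φ : Matrix (Fin n) (Fin d) ℝ} {δ : ℝ} (h : satRIP Φ (2 * a) δ) (hδ : 0 ≤ δ) :
    |nsq (Φ *ᵥ x) - nsq x| ≤ δ * c ^ 2 := by
  obtain ⟨b, y, rfl, hy, hc⟩ := hx
  calc _ ≤ δ * (∑ j, l2 (y j)) ^ 2 := h.abs_nsq_mulVec_sum_sub_le y hy
    _ ≤ δ * c ^ 2 := by
        gcongr
        exact Finset.sum_nonneg fun j _ => Real.sqrt_nonneg _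

end HasSparseSplit

lemma ripConst_le_mul_of_hasSparseSplit {n d a t : ℕ} {Φ : Matrix (Fin n) (Fin d) ℝ} {C : ℝ}
    (hsplit : ∀ x : Fin d → ℝ, sparsity x ≤ t → HasSparseSplit a x (C * l2 x)) :
    ripConst Φ t ≤ ripConst Φ (2 * a) * C ^ 2 := by
  have hδ := ripConst_nonneg Φ (2 * a)
  refine ripConst_le (by positivity) (satRIP_iff_abs_le.2 fun x hx => ?_)
  calc _ ≤ ripConst Φ (2 * a) * (C * l2 x) ^ 2 :=
        (hsplit x hx).abs_nsq_mulVec_sub_le (satRIP_ripConst Φ _) hδ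
    _ = ripConst Φ (2 * a) * C ^ 2 * nsq x := by rw [mul_pow, l2_sq]; ring

lemma exists_sparse_decomposition {d : ℕ} (a : ℕ) :
    ∀ (b : ℕ) (x : Fin d → ℝ), sparsity x ≤ a * b → ∃ y : Fin b → Fin d → ℝ,
      ∑ j, y j = x ∧ (∀ j, sparsity (y j) ≤ a) ∧ ∑ j, nsq (y j) = nsq x
  | 0, x, hx => ⟨finZeroElim, by
      simp [eq_zero_of_sparsity_eq_zero (Nat.le_zero.1 hx), nsq]⟩
  | b + 1, x, hx => by
    obtain ⟨S, hS, hScard⟩ := Finset.exists_subset_card_eq (min_le_right a (spt x).card)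
    have hrest : sparsity ((S : Set (Fin d))ᶜ.indicator x) ≤ a * b := by
      rw [sparsity_eq_card_spt, spt_indicator_compl, Finset.card_sdiff_of_subset hS, hScard]
      rw [sparsity_eq_card_spt, Nat.mul_succ] at hx
      omega
    obtain ⟨y, hsum, hy, hnsq⟩ := exists_sparse_decomposition a b _ hrest
    refine ⟨Fin.cons ((S : Set (Fin d)).indicator x) y, ?_, fun j => ?_, ?_⟩
    · rw [Fin.sum_univ_succ, Fin.cons_zero]
      simp only [Fin.cons_succ, hsum, Set.indicator_self_add_compl]
    · cases j using Fin.cases with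
      | zero =>
        rw [Fin.cons_zero, sparsity_eq_card_spt, spt_indicator]
        exact (card_le_card inter_subset_right).trans (hScard.trans_le (min_le_left _ _))
      | succ j => simpa using hy j
    · rw [Fin.sum_univ_succ, Fin.cons_zero]
      simp only [Fin.cons_succ, hnsq, nsq_indicator_add_nsq_indicator_compl]

lemma hasSparseSplit_of_sparsity_le_mul {d a b : ℕ} {x : Fin d → ℝ} (hx : sparsity x ≤ a * b) :
    HasSparseSplit a x (√b * l2 x) := by
  obtain ⟨y, hsum, hy, hnsq⟩ := exists_sparse_decomposition a b x hx
  refine ⟨b, y, hsum, hy, ?_⟩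
  rw [l2, ← Real.sqrt_mul (Nat.cast_nonneg b)]
  refine Real.le_sqrt_of_sq_le ?_
  calc (∑ j, l2 (y j)) ^ 2 ≤ b * ∑ j, l2 (y j) ^ 2 := by
        simpa using sq_sum_le_card_mul_sum_sq (s := Finset.univ) (f := fun j => l2 (y j))
    _ = b * nsq x := by simp only [l2_sq, hnsq]

lemma ripConst_mul_le {n d : ℕ} (Φ : Matrix (Fin n) (Fin d) ℝ) (a b : ℕ) :
    ripConst Φ (a * b) ≤ b * ripConst Φ (2 * a) := by
  calc ripConst Φ (a * b) ≤ ripConst Φ (2 * a) * √b ^ 2 :=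
        ripConst_le_mul_of_hasSparseSplit fun _ => hasSparseSplit_of_sparsity_le_mul
    _ = b * ripConst Φ (2 * a) := by rw [Real.sq_sqrt (Nat.cast_nonneg b), mul_comm]

/-- Maximizing `∑ i ∈ S, f i` over the `k`-subsets `S` of `U` selects `k` largest values of `f`:
otherwise swapping two elements would increase the sum. -/
lemma Finset.exists_subset_card_eq_forall_le {ι β : Type*} [DecidableEq ι] [AddCommGroup β]
    [LinearOrder β] [IsOrderedAddMonoid β] (f : ι → β) {U : Finset ι} {k : ℕ} (hk : k ≤ #U) :
    ∃ S ⊆ U, #S = k ∧ ∀ i ∈ U \ S, ∀ j ∈ S, f i ≤ f j := by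
  obtain ⟨S, hS, hmax⟩ :=
    (U.powersetCard k).exists_max_image (fun S => ∑ i ∈ S, f i) (powersetCard_nonempty.2 hk)
  rw [mem_powersetCard] at hS
  refine ⟨S, hS.1, hS.2, fun i hi j hj => ?_⟩
  rw [mem_sdiff] at hi
  have hi' : i ∉ S.erase j := fun h => hi.2 (mem_of_mem_erase h)
  have hswap : insert i (S.erase j) ∈ U.powersetCard k := by
    refine mem_powersetCard.2 ⟨insert_subset hi.1 ((erase_subset _ _).trans hS.1), ?_⟩
    rw [card_insert_of_notMem hi', card_erase_of_mem hj, ← hS.2,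
      Nat.sub_add_cancel (card_pos.2 ⟨j, hj⟩)]
  have := hmax _ hswap
  rw [sum_insert hi', ← add_sum_erase S f hj] at this
  exact le_of_add_le_add_right this

lemma card_mul_nsq_indicator_compl_le {d : ℕ} (x : Fin d → ℝ) (S : Finset (Fin d))
    (htop : ∀ i ∈ spt x \ S, ∀ j ∈ S, x i ^ 2 ≤ x j ^ 2) :
    #S * nsq ((S : Set (Fin d))ᶜ.indicator x) ≤
      sparsity ((S : Set (Fin d))ᶜ.indicator x) * nsq x := by
  set w := (S : Set (Fin d))ᶜ.indicator x
  have hentry : ∀ i ∈ spt w, #S * w i ^ 2 ≤ nsq x := by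
    intro i hi
    rw [spt_indicator_compl] at hi
    have hwi : w i = x i := Set.indicator_of_mem (by simpa using (mem_sdiff.1 hi).2) x
    rw [hwi]
    calc #S * x i ^ 2 = ∑ _j ∈ S, x i ^ 2 := by rw [sum_const, nsmul_eq_mul]
      _ ≤ ∑ j ∈ S, x j ^ 2 := sum_le_sum (htop i hi)
      _ ≤ nsq x := sum_le_sum_of_subset_of_nonneg (subset_univ S) fun _ _ _ => sq_nonneg _
  calc #S * nsq w = ∑ i ∈ spt w, #S * w i ^ 2 := by rw [nsq_eq_sum_spt, mul_sum]
    _ ≤ ∑ _i ∈ spt w, nsq x := sum_le_sum hentry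
    _ = sparsity w * nsq x := by rw [sum_const, nsmul_eq_mul, sparsity_eq_card_spt]

lemma hasSparseSplit_of_two_mul_nsq_le {d a E : ℕ} (ha : 0 < a) {w x : Fin d → ℝ}
    (hw : sparsity w ≤ E) (hnsq : 2 * a * nsq w ≤ E * nsq x) :
    HasSparseSplit a w (√((E / a + 1) * E / (2 * a)) * l2 x) := by
  refine (hasSparseSplit_of_sparsity_le_mul (b := E / a + 1)
    (hw.trans (by have := Nat.lt_mul_div_succ E ha; omega))).mono ?_
  have hdiv : ((E / a + 1 : ℕ) : ℝ) ≤ E / a + 1 := by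
    push_cast
    linarith [Nat.cast_div_le (α := ℝ) (m := E) (n := a)]
  rw [l2, l2, ← Real.sqrt_mul (Nat.cast_nonneg _), ← Real.sqrt_mul (by positivity)]
  refine Real.sqrt_le_sqrt ?_
  rw [div_mul_eq_mul_div, le_div_iff₀ (by positivity)]
  calc ((E / a + 1 : ℕ) : ℝ) * nsq w * (2 * a) = ((E / a + 1 : ℕ) : ℝ) * (2 * a * nsq w) := by
        ring
    _ ≤ (E / a + 1) * (2 * a * nsq w) :=
        mul_le_mul_of_nonneg_right hdiv (mul_nonneg (by positivity) (nsq_nonneg w))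
    _ ≤ (E / a + 1) * (E * nsq x) := by gcongr
    _ = (E / a + 1) * E * nsq x := by ring

/-- Split `x` into its `2a` largest entries, cut into two blocks of size `a`, and the
remaining at most `E` entries, each of square at most `‖x‖² / 2a`. -/
lemma hasSparseSplit_of_sparsity_le_two_mul_add {d a E : ℕ} (ha : 0 < a) {x : Fin d → ℝ}
    (hx : sparsity x ≤ 2 * a + E) :
    HasSparseSplit a x ((√2 + √((E / a + 1) * E / (2 * a))) * l2 x) := by
  have hl2 : 0 ≤ l2 x := Real.sqrt_nonneg _
  have hη : 0 ≤ √((E / a + 1) * E / (2 * a)) := Real.sqrt_nonneg _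
  by_cases hsmall : sparsity x ≤ a * 2
  · exact (hasSparseSplit_of_sparsity_le_mul hsmall).mono (by push_cast; nlinarith)
  obtain ⟨S, hS, hScard, htop⟩ :=
    (spt x).exists_subset_card_eq_forall_le (fun i => x i ^ 2) (k := 2 * a)
      (by rw [← sparsity_eq_card_spt]; omega)
  set w := (S : Set (Fin d))ᶜ.indicator x
  have hw : sparsity w ≤ E := by
    rw [sparsity_eq_card_spt, spt_indicator_compl, card_sdiff_of_subset hS, hScard]
    rw [sparsity_eq_card_spt] at hx
    omega
  have hhead := hasSparseSplit_of_sparsity_le_mul (a := a) (b := 2)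
    (x := (S : Set (Fin d)).indicator x)
    (by rw [sparsity_eq_card_spt, spt_indicator]; grw [inter_subset_right]; omega)
  have htail := hasSparseSplit_of_two_mul_nsq_le ha hw <| by
    calc 2 * (a : ℝ) * nsq w = #S * nsq w := by rw [hScard]; push_cast; ring
      _ ≤ sparsity w * nsq x := card_mul_nsq_indicator_compl_le x S htop
      _ ≤ E * nsq x := by gcongr; exact nsq_nonneg x
  have hhead_le : l2 ((S : Set (Fin d)).indicator x) ≤ l2 x := Real.sqrt_le_sqrt <| by
    linarith [nsq_indicator_add_nsq_indicator_compl (S : Set (Fin d)) x, nsq_nonneg w]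
  have := hhead.add htail
  rw [Set.indicator_self_add_compl] at this
  refine this.mono ?_
  rw [Nat.cast_ofNat, add_mul _ _ (l2 x)]
  gcongr

lemma ripConst_two_mul_add_le {n d a : ℕ} (Φ : Matrix (Fin n) (Fin d) ℝ) (ha : 0 < a) (E : ℕ) :
    ripConst Φ (2 * a + E) ≤ ripConst Φ (2 * a) * (√2 + √((E / a + 1) * E / (2 * a))) ^ 2 :=
  ripConst_le_mul_of_hasSparseSplit fun _ => hasSparseSplit_of_sparsity_le_two_mul_add ha

/-- The case `a = (m + 1) / 2`, `E = m + 1 + e - 2a` of `ripConst_two_mul_add_le`. -/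
lemma ripConst_add_le {n d m e : ℕ} (Φ : Matrix (Fin n) (Fin d) ℝ) (hem : e ≤ m) :
    ripConst Φ (m + 1 + e) ≤
      ripConst Φ (m + 1) * (√2 + √((2 * ((e + 1) / m) + 1) * ((e + 1) / m))) ^ 2 := by
  rcases Nat.eq_zero_or_pos m with rfl | hm
  · obtain rfl : e = 0 := by omega
    refine le_mul_of_one_le_right (ripConst_nonneg Φ _) ?_
    calc (1 : ℝ) ≤ √2 ^ 2 := by norm_num
      _ ≤ _ := by gcongr; exact le_add_of_nonneg_right (Real.sqrt_nonneg _)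
  set a := (m + 1) / 2
  set E := m + 1 + e - 2 * a
  have ha : 0 < a := by omega
  have hE : (E : ℝ) ≤ e + 1 := by exact_mod_cast (by omega : E ≤ e + 1)
  have hma : (m : ℝ) ≤ 2 * a := by exact_mod_cast (by omega : m ≤ 2 * a)
  have hratio : (E : ℝ) / (2 * a) ≤ (e + 1) / m :=
    div_le_div₀ (by positivity) hE (by exact_mod_cast hm) hma
  have hexcess :
      ((E : ℝ) / a + 1) * E / (2 * a) ≤ (2 * (((e : ℝ) + 1) / m) + 1) * ((e + 1) / m) := by
    have ha' : (a : ℝ) ≠ 0 := by exact_mod_cast ha.ne'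
    calc ((E : ℝ) / a + 1) * E / (2 * a) = (2 * (E / (2 * a)) + 1) * (E / (2 * a)) := by
          field_simp
      _ ≤ _ := by gcongr
  calc ripConst Φ (m + 1 + e) = ripConst Φ (2 * a + E) := by congr 1; omega
    _ ≤ ripConst Φ (2 * a) * (√2 + √((E / a + 1) * E / (2 * a))) ^ 2 :=
        ripConst_two_mul_add_le Φ ha E
    _ ≤ _ := by
        gcongr
        · exact ripConst_nonneg Φ _
        · exact ripConst_mono (by omega)

/-- (i) for positive integers `a, b`, the RIP constants satisfy
`δ_{ab} ≤ b · δ_{2a}`; (ii) consequently, along any sequence with `ē, m → ∞` and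
`ē = o(m)`, the OMP condition `δ_{m+1} < 1/√(m+1)` implies
`δ_{m+1+ē} ≤ 2(1 + o(1))/√(m+1)`. -/
theorem stmt19 :
    (∀ (n d : ℕ) (Φ : Matrix (Fin n) (Fin d) ℝ) (a b : ℕ), 0 < a → 0 < b →
      ripConst Φ (a * b) ≤ (b : ℝ) * ripConst Φ (2 * a)) ∧
    (∀ (nn dd m e : ℕ → ℕ) (Φ : ∀ k, Matrix (Fin (nn k)) (Fin (dd k)) ℝ),
      Filter.Tendsto (fun k => m k) Filter.atTop Filter.atTop →
      Filter.Tendsto (fun k => e k) Filter.atTop Filter.atTop →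
      Filter.Tendsto (fun k => (e k : ℝ) / (m k : ℝ)) Filter.atTop (nhds 0) →
      (∀ k, e k ≤ m k) →
      (∀ k, ripConst (Φ k) (m k + 1) < 1 / Real.sqrt ((m k : ℝ) + 1)) →
      ∃ o : ℕ → ℝ, Filter.Tendsto o Filter.atTop (nhds 0) ∧
        ∀ k, ripConst (Φ k) (m k + 1 + e k) ≤
          2 * (1 + o k) / Real.sqrt ((m k : ℝ) + 1)) := by
  refine ⟨fun n d Φ a b _ _ => ripConst_mul_le Φ a b, ?_⟩
  intro nn dd m e Φ hm _ heo hle hrip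
  set F : ℝ → ℝ := fun r => (√2 + √((2 * r + 1) * r)) ^ 2
  set ρ : ℕ → ℝ := fun k => ((e k : ℝ) + 1) / m k
  have hρ : Filter.Tendsto ρ Filter.atTop (nhds 0) := by
    simpa [ρ, add_div] using
      heo.add (tendsto_inv_atTop_zero.comp (tendsto_natCast_atTop_atTop.comp hm))
  refine ⟨fun k => F (ρ k) / 2 - 1, ?_, fun k => ?_⟩
  · have hF : Continuous F := by fun_prop
    simpa [F] using (((hF.tendsto 0).comp hρ).div_const 2).sub_const 1
  · calc ripConst (Φ k) (m k + 1 + e k) ≤ ripConst (Φ k) (m k + 1) * F (ρ k) :=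
          ripConst_add_le (Φ k) (hle k)
      _ ≤ 1 / √(m k + 1) * F (ρ k) := by gcongr; exact (hrip k).le
      _ = 2 * (1 + (F (ρ k) / 2 - 1)) / √(m k + 1) := by ring
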